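/- arXiv:1910.04692 — 2 statements merged into one kernel-verified Lean document; each statement's English description precedes it below -/
import Mathlib

section
/- Let G be a finite group, let α be an involutory automorphism of G, and let N be an α-invariant normal subgroup of G. If g ∈ G is such that the coset Ng has odd order in G/N and the automorphism of G/N induced by α inverts Ng (i.e. (Ng)^α = (Ng)⁻¹), then there exists h ∈ J_G(α) with Nh = Ng. -/
/-- The paper-style commutator `[g,x] = g⁻¹x⁻¹gx`. -/
def commStep {G : Type*} [Group G] (x g : G) : G := g⁻¹ * x⁻¹ * g * x

/-- `E_{G,k}(x) = {[g,x,…,x] : g ∈ G}` (`x` appearing `k` times). -/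
def ESet {G : Type*} [Group G] (x : G) (k : ℕ) : Set G := Set.range ((commStep x)^[k])

/-- The step `g ↦ [g,α] = g⁻¹ · α g` for an automorphism `α`. -/
def autStep {G : Type*} [Group G] (α : G ≃* G) (g : G) : G := g⁻¹ * α g

/-- `E_{G,k}(α) = {[g,α,…,α] : g ∈ G}` (`α` appearing `k` times). -/
def EAutSet {G : Type*} [Group G] (α : G ≃* G) (k : ℕ) : Set G := Set.range ((autStep α)^[k])

/-- `[G,α]`: the subgroup generated by all `g⁻¹ · α g`. -/
def autCommutator {G : Type*} [Group G] (α : G ≃* G) : Subgroup G :=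
  Subgroup.closure (Set.range (autStep α))

/-- `J_G(α)`: the set of odd-order elements of `G` inverted by `α`. -/
def JSet {G : Type*} [Group G] (α : G ≃* G) : Set G :=
  {g | Odd (orderOf g) ∧ α g = g⁻¹}

/-- `C_G(α)`: the fixed-point subgroup of the automorphism `α`. -/
def fixedSubgroup {G : Type*} [Group G] (α : G ≃* G) : Subgroup G where
  carrier := {g | α g = g}
  one_mem' := map_one α
  mul_mem' := by
    intro a b ha hb
    simp only [Set.mem_setOf_eq, map_mul] at *
    rw [ha, hb]
  inv_mem' := by
    intro a ha
    simp only [Set.mem_setOf_eq, map_inv] at *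
    rw [ha]

/-- `H` is a normal subgroup of `K` (both regarded as subgroups of an ambient group). -/
def NormalIn {G : Type*} [Group G] (H K : Subgroup G) : Prop :=
  H ≤ K ∧ ∀ k ∈ K, ∀ h ∈ H, k * h * k⁻¹ ∈ H

/-- `A` is subnormal: there is a chain `A = c 0 ⊴ c 1 ⊴ ⋯ ⊴ c n = ⊤`. -/
def IsSubnormal {G : Type*} [Group G] (A : Subgroup G) : Prop :=
  ∃ (n : ℕ) (c : ℕ → Subgroup G), c 0 = A ∧ c n = ⊤ ∧ ∀ i < n, NormalIn (c i) (c (i + 1))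

/-- `G` satisfies the max condition on subgroups. -/
def MaxCondSubgroups (G : Type*) [Group G] : Prop :=
  ∀ S : Set (Subgroup G), S.Nonempty → ∃ M ∈ S, ∀ H ∈ S, M ≤ H → H = M

/-- `G` satisfies the min condition on subnormal subgroups. -/
def MinCondSubnormal (G : Type*) [Group G] : Prop :=
  ∀ S : Set (Subgroup G), S.Nonempty → (∀ H ∈ S, IsSubnormal H) →
    ∃ M ∈ S, ∀ H ∈ S, H ≤ M → H = M

/-- `⟨A^H⟩`: the subgroup generated by all `H`-conjugates of `A`. -/
def conjClosure {G : Type*} [Group G] (A H : Subgroup G) : Subgroup G :=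
  Subgroup.closure {x | ∃ h ∈ H, ∃ a ∈ A, x = h * a * h⁻¹}

/-- The normal closure descending series of `A` in `H`: `H₀ = H`, `H_{i+1} = ⟨A^{H_i}⟩`. -/
def nccSeries {G : Type*} [Group G] (A H : Subgroup G) : ℕ → Subgroup G
  | 0 => H
  | i + 1 => conjClosure A (nccSeries A H i)

/-- `F(A,H) = ⋂_i H_i`, the stable term of the normal closure descending series. -/
def nccStable {G : Type*} [Group G] (A H : Subgroup G) : Subgroup G :=
  ⨅ i, nccSeries A H i

/-! Since `α` inverts `Ng`, the element `x = g · (α g)⁻¹` is inverted by `α` and `Nx = (Ng)²`. If `2 ^ a`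
is the `2`-part of the order of `x`, then `x ^ 2 ^ a` has odd order, so all its powers lie in `J_G(α)`,
and it maps to `(Ng) ^ 2 ^ (a + 1)`, which generates `⟨Ng⟩` because `Ng` has odd order. -/

theorem exists_odd_orderOf_pow_two_pow {M : Type*} [Monoid M] {x : M} (hx : IsOfFinOrder x) :
    ∃ k : ℕ, Odd (orderOf (x ^ 2 ^ k)) := by
  have hn : orderOf x ≠ 0 := hx.orderOf_pos.ne'
  refine ⟨(orderOf x).factorization 2, ?_⟩
  rw [orderOf_pow_of_dvd (by positivity) (Nat.ordProj_dvd _ 2), Nat.odd_iff,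
    ← Nat.two_dvd_ne_zero]
  exact Nat.not_dvd_ordCompl Nat.prime_two hn

theorem pow_mem_JSet {G : Type*} [Group G] {α : G ≃* G} {x : G} (hx : x ∈ JSet α) (n : ℕ) :
    x ^ n ∈ JSet α :=
  ⟨hx.1.of_dvd_nat (orderOf_pow_dvd n), by rw [map_pow, hx.2, inv_pow]⟩

theorem stmt_16_general {G : Type*} [Group G] [Finite G] (α : G ≃* G)
    (hinv : ∀ g : G, α (α g) = g) (N : Subgroup G) [N.Normal]
    (g : G)
    (hodd : Odd (orderOf (QuotientGroup.mk' N g)))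
    (hinverted : QuotientGroup.mk' N (α g) = (QuotientGroup.mk' N g)⁻¹) :
    ∃ h ∈ JSet α, QuotientGroup.mk' N h = QuotientGroup.mk' N g := by
  set x := g * (α g)⁻¹
  have hαx : α x = x⁻¹ := by simp only [x, map_mul, map_inv, hinv, mul_inv_rev, inv_inv]
  have hNx : QuotientGroup.mk' N x = QuotientGroup.mk' N g ^ 2 := by
    rw [map_mul, map_inv, hinverted, inv_inv, sq]
  obtain ⟨k, hk⟩ := exists_odd_orderOf_pow_two_pow (isOfFinOrder_of_finite x)
  have hy : x ^ 2 ^ k ∈ JSet α := ⟨hk, by rw [map_pow, hαx, inv_pow]⟩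
  obtain ⟨t, ht⟩ := exists_pow_eq_self_of_coprime
    ((Nat.coprime_two_left.mpr hodd).pow_left (k + 1))
  refine ⟨(x ^ 2 ^ k) ^ t, pow_mem_JSet hy t, ?_⟩
  rw [map_pow, map_pow, hNx, ← pow_mul _ 2, ← pow_succ', ht]

/-- Lemma 16 of Guralnick–Tracey: if `N` is an `α`-invariant normal subgroup of `G`
and the coset `Ng` has odd order in `G/N` and is inverted by the automorphism induced
by `α`, then some `h ∈ J_G(α)` satisfies `Nh = Ng`. -/
theorem stmt_16 {G : Type*} [Group G] [Finite G] (α : G ≃* G)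
    (hinv : ∀ g : G, α (α g) = g) (N : Subgroup G) [N.Normal]
    (hNinv : ∀ n ∈ N, α n ∈ N) (g : G)
    (hodd : Odd (orderOf (QuotientGroup.mk' N g)))
    (hinverted : QuotientGroup.mk' N (α g) = (QuotientGroup.mk' N g)⁻¹) :
    ∃ h ∈ JSet α, QuotientGroup.mk' N h = QuotientGroup.mk' N g :=
  stmt_16_general α hinv N g hodd hinverted
end

section
/- Let G be a nontrivial finite group and let α be an involutory automorphism of G with [G,α] = G. Then the abelianization G/[G,G] has odd order, α induces the inversion map on G/[G,G] (i.e. ([G,G]g)^α = ([G,G]g)⁻¹ for all g ∈ G), the order of G/[G,G] is at most |J_G(α)|, and C_G(α) ≤ [G,G]. -/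
/-!
Pass to the abelianization `A = G/[G,G]` and the involution `β` of `A` induced by `α`. As `A` is
abelian, `x ↦ x⁻¹ β x` is a homomorphism of `A`; its image is a subgroup containing the image of
`[G,α] = G`, so it is onto, hence injective, i.e. `β` is fixed-point-free. A fixed-point-free
involution of a finite group is inversion and forces odd order. Every coset of `[G,G]` is then the
class of some `a = x⁻¹ α x`, which `α` inverts, and since the coset has odd order in `A`, the odd
part of `a` lies in the same coset and belongs to `J_G(α)`.
-/

open MonoidHom Subgroup

theorem MonoidHom.FixedPointFree.of_surjective_commutatorMap {F G : Type*} [Group G] [Finite G]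
    [FunLike F G G] [MonoidHomClass F G G] {φ : F}
    (h : Function.Surjective (commutatorMap φ)) : FixedPointFree φ := fun g hg =>
  Finite.injective_iff_surjective.2 h (by simp [hg] : commutatorMap φ g = commutatorMap φ 1)

theorem exists_pow_odd_orderOf_map_eq {G H : Type*} [Monoid G] [LeftCancelMonoid H]
    (φ : G →* H) {a : G} (ha : IsOfFinOrder a) (hodd : Odd (orderOf (φ a))) :
    ∃ e : ℕ, Odd (orderOf (a ^ e)) ∧ φ (a ^ e) = φ a := by
  set k := (orderOf a).factorization 2
  set m := ordCompl[2] (orderOf a)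
  have hn : 2 ^ k * m = orderOf a := Nat.ordProj_mul_ordCompl_eq_self _ 2
  have hm : Nat.Coprime 2 m := Nat.coprime_ordCompl Nat.prime_two ha.orderOf_pos.ne'
  -- `a ^ e` with `e ≡ 0 [MOD 2 ^ k]` and `e ≡ 1 [MOD m]` is the odd part of `a`
  obtain ⟨e, he0, he1⟩ := Nat.chineseRemainder (hm.pow_left k) 0 1
  have hdvd : orderOf (φ a) ∣ m :=
    (hodd.coprime_two_right.pow_right k).dvd_of_dvd_mul_left (hn ▸ orderOf_map_dvd φ a)
  refine ⟨e, hm.odd_of_left.of_dvd_nat (orderOf_dvd_of_pow_eq_one ?_), ?_⟩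
  · rw [← pow_mul, ← orderOf_dvd_iff_pow_eq_one]
    exact hn ▸ mul_dvd_mul_right (Nat.modEq_zero_iff_dvd.1 he0) m
  · rw [map_pow, (pow_eq_pow_iff_modEq).2 (he1.of_dvd hdvd), pow_one]

theorem Abelianization.of_surjective {G : Type*} [Group G] :
    Function.Surjective (Abelianization.of (G := G)) :=
  QuotientGroup.mk'_surjective _

section autCommutator

variable {G : Type*} [Group G] (α : G ≃* G)

theorem apply_autStep_eq_inv (hinv : ∀ g : G, α (α g) = g) (x : G) :
    α (autStep α x) = (autStep α x)⁻¹ := by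
  simp [autStep, hinv]

theorem pow_mem_JSet_s17 {a : G} (ha : α a = a⁻¹) {e : ℕ} (he : Odd (orderOf (a ^ e))) :
    a ^ e ∈ JSet α :=
  ⟨he, by rw [map_pow, ha, inv_pow]⟩

theorem exists_map_autStep_eq {A : Type*} [CommGroup A] (π : G →* A)
    (hG : autCommutator α = ⊤) (g : G) : ∃ x, π (autStep α x) = π g := by
  let ψ : G →* A := π⁻¹ * π.comp α.toMonoidHom
  have hψ : ∀ x, ψ x = π (autStep α x) := by simp [ψ, autStep]
  have hg : π g ∈ (autCommutator α).map π := hG ▸ ⟨g, mem_top g, rfl⟩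
  rw [autCommutator, MonoidHom.map_closure] at hg
  have hle : closure (π '' Set.range (autStep α)) ≤ ψ.range :=
    (closure_le _).2 (by rintro _ ⟨_, ⟨x, rfl⟩, rfl⟩; exact ⟨x, hψ x⟩)
  obtain ⟨x, hx⟩ := hle hg
  exact ⟨x, (hψ x).symm.trans hx⟩

theorem abelianizationMap_involutive (hinv : ∀ g : G, α (α g) = g) :
    Function.Involutive (Abelianization.map α.toMonoidHom) := by
  intro q
  obtain ⟨g, rfl⟩ := Abelianization.of_surjective q
  simp [hinv]

theorem fixedPointFree_abelianizationMap [Finite G] (hG : autCommutator α = ⊤) :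
    FixedPointFree (Abelianization.map α.toMonoidHom) := by
  refine .of_surjective_commutatorMap fun q => ?_
  obtain ⟨g, rfl⟩ := Abelianization.of_surjective q
  obtain ⟨x, hx⟩ := exists_map_autStep_eq α Abelianization.of hG g
  refine ⟨(Abelianization.of x)⁻¹, ?_⟩
  rw [← hx]
  simp [autStep, div_eq_mul_inv]

theorem natCard_abelianization_le_ncard_JSet [Finite G] (hinv : ∀ g : G, α (α g) = g)
    (hG : autCommutator α = ⊤) : Nat.card (Abelianization G) ≤ (JSet α).ncard := by
  have hfpf := fixedPointFree_abelianizationMap α hG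
  have hβ := abelianizationMap_involutive α hinv
  have hJ : ∀ q : Abelianization G, ∃ b ∈ JSet α, Abelianization.of b = q := fun q => by
    obtain ⟨g, rfl⟩ := Abelianization.of_surjective q
    obtain ⟨x, hx⟩ := exists_map_autStep_eq α Abelianization.of hG g
    obtain ⟨e, he, hex⟩ := exists_pow_odd_orderOf_map_eq Abelianization.of
      (isOfFinOrder_of_finite (autStep α x)) (hfpf.odd_orderOf_of_involutive hβ _)
    exact ⟨_, pow_mem_JSet_s17 α (apply_autStep_eq_inv α hinv x) he, hex.trans hx⟩
  calc Nat.card (Abelianization G) ≤ Nat.card (JSet α) :=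
        Nat.card_le_card_of_surjective (fun b => Abelianization.of b.1)
          fun q => (hJ q).elim fun b hb => ⟨⟨b, hb.1⟩, hb.2⟩
    _ = (JSet α).ncard := Nat.card_coe_set_eq _

end autCommutator

theorem stmt_17_general {G : Type*} [Group G] [Finite G] (α : G ≃* G)
    (hinv : ∀ g : G, α (α g) = g) (hG : autCommutator α = ⊤) :
    Odd (Nat.card (G ⧸ commutator G)) ∧
      (∀ g : G, QuotientGroup.mk' (commutator G) (α g) =
        (QuotientGroup.mk' (commutator G) g)⁻¹) ∧
      Nat.card (G ⧸ commutator G) ≤ (JSet α).ncard ∧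
      fixedSubgroup α ≤ commutator G := by
  have hfpf := fixedPointFree_abelianizationMap α hG
  have hβ := abelianizationMap_involutive α hinv
  refine ⟨hfpf.odd_card_of_involutive hβ, fun g => ?_,
    natCard_abelianization_le_ncard_JSet α hinv hG, fun g hg => ?_⟩
  · exact congrFun (hfpf.coe_eq_inv_of_involutive hβ) (Abelianization.of g)
  · rw [← Abelianization.ker_of]
    exact hfpf _ (congrArg Abelianization.of (hg : α g = g))

/-- Lemma 17 of Guralnick–Tracey: for an involutory automorphism `α` of a nontrivial
finite group `G` with `[G,α] = G`: `|G/[G,G]|` is odd, `α` induces inversion on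
`G/[G,G]`, `|G/[G,G]| ≤ |J_G(α)|`, and `C_G(α) ≤ [G,G]`. -/
theorem stmt_17 {G : Type*} [Group G] [Finite G] [Nontrivial G] (α : G ≃* G)
    (hinv : ∀ g : G, α (α g) = g) (hG : autCommutator α = ⊤) :
    Odd (Nat.card (G ⧸ commutator G)) ∧
      (∀ g : G, QuotientGroup.mk' (commutator G) (α g) =
        (QuotientGroup.mk' (commutator G) g)⁻¹) ∧
      Nat.card (G ⧸ commutator G) ≤ (JSet α).ncard ∧
      fixedSubgroup α ≤ commutator G :=
  stmt_17_general α hinv hG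
end
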